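/- Under the same hypotheses as the hyperbolized NLS semidiscretization (periodic upwind SBP operators with diagonal positive definite M, system v' = −D₋ω − β(v²+w²)⊙w, w' = D₋ν + β(v²+w²)⊙v, τν' = D₊w − ω, τω' = −D₊v + ν), the discrete energy E(t) = 2νᵀM D₊ v − νᵀMν + 2ωᵀM D₊ w − ωᵀMω − (β/2) 𝟙ᵀ M (v²+w²)² is constant in time. -/

import Mathlib

/-!
Differentiate `E` along a solution and use the summation-by-parts identity `M D₊ = -D₋ᵀ M` to move
`D₊` off `ν` and `ω`. Since `M` is diagonal, the rate of change is then a sum over grid points of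
terms that vanish identically: the `τ⁻¹`-terms cancel by symmetry of `M`, and the `β`-terms cancel
because a diagonal `M` commutes with componentwise products.
-/

open Matrix Finset

variable {ι : Type*} [Fintype ι]

section Derivatives

variable {𝕜 : Type*} [NontriviallyNormedField 𝕜] {x y : 𝕜 → ι → 𝕜} {x' y' : ι → 𝕜} {t : 𝕜}

theorem HasDerivAt.dotProduct (hx : HasDerivAt x x' t) (hy : HasDerivAt y y' t) :
    HasDerivAt (fun s => x s ⬝ᵥ y s) (x' ⬝ᵥ y t + x t ⬝ᵥ y') t := by
  have h : HasDerivAt (fun s => ∑ i, x s i * y s i) (∑ i, (x' i * y t i + x t i * y' i)) t :=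
    HasDerivAt.fun_sum fun i _ => (hasDerivAt_pi.mp hx i).mul (hasDerivAt_pi.mp hy i)
  simpa only [_root_.dotProduct, sum_add_distrib] using h

theorem HasDerivAt.mulVec (A : Matrix ι ι 𝕜) (hx : HasDerivAt x x' t) :
    HasDerivAt (fun s => A *ᵥ x s) (A *ᵥ x') t :=
  hasDerivAt_pi.mpr fun i => by
    simpa only [Matrix.mulVec, zero_dotProduct, zero_add] using
      (hasDerivAt_const t (A i)).dotProduct hx

end Derivatives

theorem dotProduct_mul_mulVec_of_add_transpose_mul_eq_zero {R : Type*} [CommRing R]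
    {M Dp Dm : Matrix ι ι R} (hSBP : M * Dp + Dmᵀ * M = 0) (x y : ι → R) :
    x ⬝ᵥ (M * Dp) *ᵥ y = -(Dm *ᵥ x ⬝ᵥ M *ᵥ y) := by
  rw [eq_neg_of_add_eq_zero_left hSBP, neg_mulVec, dotProduct_neg, ← mulVec_mulVec,
    dotProduct_mulVec, vecMul_transpose]

noncomputable section Energy

variable (M Dp : Matrix ι ι ℝ) (β : ℝ)

def hyperbolizedNLSEnergy (v w ν ω : ι → ℝ) : ℝ :=
  2 * ν ⬝ᵥ (M * Dp) *ᵥ v - ν ⬝ᵥ M *ᵥ ν + 2 * ω ⬝ᵥ (M * Dp) *ᵥ w - ω ⬝ᵥ M *ᵥ ω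
    - β / 2 * 1 ⬝ᵥ M *ᵥ (v ^ 2 + w ^ 2) ^ 2

def hyperbolizedNLSEnergyRate (v w ν ω v' w' ν' ω' : ι → ℝ) : ℝ :=
  2 * (ν' ⬝ᵥ (M * Dp) *ᵥ v + ν ⬝ᵥ (M * Dp) *ᵥ v') - (ν' ⬝ᵥ M *ᵥ ν + ν ⬝ᵥ M *ᵥ ν')
    + 2 * (ω' ⬝ᵥ (M * Dp) *ᵥ w + ω ⬝ᵥ (M * Dp) *ᵥ w') - (ω' ⬝ᵥ M *ᵥ ω + ω ⬝ᵥ M *ᵥ ω')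
    - β / 2 * 1 ⬝ᵥ M *ᵥ (2 * (v ^ 2 + w ^ 2) * (2 * v * v' + 2 * w * w'))

theorem hasDerivAt_hyperbolizedNLSEnergy {v w ν ω : ℝ → ι → ℝ} {v' w' ν' ω' : ι → ℝ} {t : ℝ}
    (hv : HasDerivAt v v' t) (hw : HasDerivAt w w' t) (hν : HasDerivAt ν ν' t)
    (hω : HasDerivAt ω ω' t) :
    HasDerivAt (fun s => hyperbolizedNLSEnergy M Dp β (v s) (w s) (ν s) (ω s))
      (hyperbolizedNLSEnergyRate M Dp β (v t) (w t) (ν t) (ω t) v' w' ν' ω') t := by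
  have hg : HasDerivAt (fun s => (v s ^ 2 + w s ^ 2) ^ 2)
      (2 * (v t ^ 2 + w t ^ 2) * (2 * v t * v' + 2 * w t * w')) t :=
    (((hv.pow 2).add (hw.pow 2)).pow 2).congr_deriv
      (by push_cast [Pi.add_apply, Pi.pow_apply]; ring)
  have hνv := (hν.dotProduct (hv.mulVec (M * Dp))).const_mul 2
  have hνν := hν.dotProduct (hν.mulVec M)
  have hωw := (hω.dotProduct (hw.mulVec (M * Dp))).const_mul 2
  have hωω := hω.dotProduct (hω.mulVec M)
  have hquartic := ((hasDerivAt_const t 1).dotProduct (hg.mulVec M)).const_mul (β / 2)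
  have h := (((hνv.sub hνν).add hωw).sub hωω).sub hquartic
  simp only [zero_dotProduct, zero_add] at h
  exact h

end Energy

theorem hyperbolizedNLSEnergyRate_eq_zero [DecidableEq ι] {Dp Dm : Matrix ι ι ℝ} {d : ι → ℝ}
    (hSBP : diagonal d * Dp + Dmᵀ * diagonal d = 0) (β τ : ℝ) (v w ν ω : ι → ℝ) :
    hyperbolizedNLSEnergyRate (diagonal d) Dp β v w ν ω
      (-(Dm *ᵥ ω) - fun i => β * (v i ^ 2 + w i ^ 2) * w i)
      (Dm *ᵥ ν + fun i => β * (v i ^ 2 + w i ^ 2) * v i)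
      (τ⁻¹ • (Dp *ᵥ w - ω)) (τ⁻¹ • (-(Dp *ᵥ v) + ν)) = 0 := by
  rw [hyperbolizedNLSEnergyRate, dotProduct_mul_mulVec_of_add_transpose_mul_eq_zero hSBP ν,
    dotProduct_mul_mulVec_of_add_transpose_mul_eq_zero hSBP ω, ← mulVec_mulVec, ← mulVec_mulVec]
  simp only [dotProduct, mulVec_diagonal, Pi.add_apply, Pi.sub_apply, Pi.neg_apply, Pi.mul_apply,
    Pi.pow_apply, Pi.smul_apply, Pi.ofNat_apply, smul_eq_mul, mul_sum,
    ← sum_neg_distrib, ← sum_add_distrib, ← sum_sub_distrib]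
  exact sum_eq_zero fun i _ => by ring

theorem hyperbolized_nls_energy_conservation_general (N : ℕ) (β τ : ℝ)
    (M Dp Dm : Matrix (Fin N) (Fin N) ℝ)
    (d : Fin N → ℝ) (hM : M = Matrix.diagonal d)
    (hSBP : M * Dp + Dm.transpose * M = 0)
    (v w ν ω : ℝ → Fin N → ℝ)
    (hv : ∀ t : ℝ, HasDerivAt v
      (-(Dm.mulVec (ω t)) - fun i => β * (v t i ^ 2 + w t i ^ 2) * w t i) t)
    (hw : ∀ t : ℝ, HasDerivAt w
      (Dm.mulVec (ν t) + fun i => β * (v t i ^ 2 + w t i ^ 2) * v t i) t)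
    (hν : ∀ t : ℝ, HasDerivAt ν (τ⁻¹ • (Dp.mulVec (w t) - ω t)) t)
    (hω : ∀ t : ℝ, HasDerivAt ω (τ⁻¹ • (-(Dp.mulVec (v t)) + ν t)) t) :
    ∀ t₁ t₂ : ℝ,
      (2 * dotProduct (ν t₁) ((M * Dp).mulVec (v t₁))
        - dotProduct (ν t₁) (M.mulVec (ν t₁))
        + 2 * dotProduct (ω t₁) ((M * Dp).mulVec (w t₁))
        - dotProduct (ω t₁) (M.mulVec (ω t₁))
        - β / 2 * dotProduct (fun _ => (1 : ℝ))
            (M.mulVec fun i => (v t₁ i ^ 2 + w t₁ i ^ 2) ^ 2))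
      = (2 * dotProduct (ν t₂) ((M * Dp).mulVec (v t₂))
        - dotProduct (ν t₂) (M.mulVec (ν t₂))
        + 2 * dotProduct (ω t₂) ((M * Dp).mulVec (w t₂))
        - dotProduct (ω t₂) (M.mulVec (ω t₂))
        - β / 2 * dotProduct (fun _ => (1 : ℝ))
            (M.mulVec fun i => (v t₂ i ^ 2 + w t₂ i ^ 2) ^ 2)) := by
  subst hM
  have hE (t : ℝ) :
      HasDerivAt (fun s => hyperbolizedNLSEnergy (diagonal d) Dp β (v s) (w s) (ν s) (ω s)) 0 t :=
    (hasDerivAt_hyperbolizedNLSEnergy _ _ β (hv t) (hw t) (hν t) (hω t)).congr_deriv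
      (hyperbolizedNLSEnergyRate_eq_zero hSBP β τ _ _ _ _)
  exact is_const_of_deriv_eq_zero (fun t => (hE t).differentiableAt) (fun t => (hE t).deriv)

/-- Semidiscrete energy conservation for the hyperbolized NLS semidiscretization
with periodic upwind SBP operators:
`E(t) = 2νᵀM D₊ v − νᵀMν + 2ωᵀM D₊ w − ωᵀMω − (β/2) 𝟙ᵀ M (v²+w²)²`
is constant in time. -/
theorem hyperbolized_nls_energy_conservation (N : ℕ) (β τ : ℝ) (hτ : 0 < τ)
    (M Dp Dm : Matrix (Fin N) (Fin N) ℝ)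
    (d : Fin N → ℝ) (hd : ∀ i, 0 < d i) (hM : M = Matrix.diagonal d)
    (hSBP : M * Dp + Dm.transpose * M = 0)
    (v w ν ω : ℝ → Fin N → ℝ)
    (hv : ∀ t : ℝ, HasDerivAt v
      (-(Dm.mulVec (ω t)) - fun i => β * (v t i ^ 2 + w t i ^ 2) * w t i) t)
    (hw : ∀ t : ℝ, HasDerivAt w
      (Dm.mulVec (ν t) + fun i => β * (v t i ^ 2 + w t i ^ 2) * v t i) t)
    (hν : ∀ t : ℝ, HasDerivAt ν (τ⁻¹ • (Dp.mulVec (w t) - ω t)) t)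
    (hω : ∀ t : ℝ, HasDerivAt ω (τ⁻¹ • (-(Dp.mulVec (v t)) + ν t)) t) :
    ∀ t₁ t₂ : ℝ,
      (2 * dotProduct (ν t₁) ((M * Dp).mulVec (v t₁))
        - dotProduct (ν t₁) (M.mulVec (ν t₁))
        + 2 * dotProduct (ω t₁) ((M * Dp).mulVec (w t₁))
        - dotProduct (ω t₁) (M.mulVec (ω t₁))
        - β / 2 * dotProduct (fun _ => (1 : ℝ))
            (M.mulVec fun i => (v t₁ i ^ 2 + w t₁ i ^ 2) ^ 2))
      = (2 * dotProduct (ν t₂) ((M * Dp).mulVec (v t₂))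
        - dotProduct (ν t₂) (M.mulVec (ν t₂))
        + 2 * dotProduct (ω t₂) ((M * Dp).mulVec (w t₂))
        - dotProduct (ω t₂) (M.mulVec (ω t₂))
        - β / 2 * dotProduct (fun _ => (1 : ℝ))
            (M.mulVec fun i => (v t₂ i ^ 2 + w t₂ i ^ 2) ^ 2)) :=
  hyperbolized_nls_energy_conservation_general N β τ M Dp Dm d hM hSBP v w ν ω hv hw hν hω
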